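/- Every finite connected simple graph G has a tree-cut decomposition 𝒯 = (T, 𝒳) with w(𝒯) = scw(G) such that every node b of T whose bag X_b is empty has degree exactly 3 in T. -/

import Mathlib

open SimpleGraph

universe u

variable {V : Type u}

/-- A tree-cut decomposition of a finite simple graph `G`: a finite tree `T`
on a node type `B`, together with pairwise disjoint (possibly empty) bags
`bag b ⊆ V` whose union is all of `V`. -/
structure TreeCutDecomp [Finite V] (G : SimpleGraph V) where
  B : Type
  finB : Finite B
  T : SimpleGraph B
  isTree : T.IsTree
  bag : B → Set V
  disj : Pairwise fun b d => Disjoint (bag b) (bag d)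
  covers : ∀ v : V, ∃ b, v ∈ bag b

namespace TreeCutDecomp

variable [Finite V] {G : SimpleGraph V}

/-- The adhesion of a link `l` of `T`: the set of edges of `G` whose endpoints lie in
bags indexed by nodes in different components of `T - l` (equivalently, nodes such that
every walk between them uses `l`). -/
def linkAdh (D : TreeCutDecomp G) (l : Sym2 D.B) : Set (Sym2 V) :=
  {e | e ∈ G.edgeSet ∧ ∃ v w : V, ∃ b d : D.B, e = s(v, w) ∧ v ∈ D.bag b ∧ w ∈ D.bag d ∧
    ∀ p : D.T.Walk b d, l ∈ p.edges}

/-- The adhesion of a node `n` of `T`: the set of edges of `G` whose endpoints lie in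
bags indexed by nodes in different components of `T - n` (equivalently, nodes distinct
from `n` such that every walk between them passes through `n`). -/
def nodeAdh (D : TreeCutDecomp G) (n : D.B) : Set (Sym2 V) :=
  {e | e ∈ G.edgeSet ∧ ∃ v w : V, ∃ b d : D.B, e = s(v, w) ∧ v ∈ D.bag b ∧ w ∈ D.bag d ∧
    b ≠ n ∧ d ≠ n ∧ ∀ p : D.T.Walk b d, n ∈ p.support}

/-- The width of a tree-cut decomposition: the maximum of `|adh(l)|` over links `l` of `T`
and of `|X_b| + |adh(b)|` over nodes `b` of `T`. -/
noncomputable def width (D : TreeCutDecomp G) : ℕ :=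
  sSup ({n | ∃ l ∈ D.T.edgeSet, n = (D.linkAdh l).ncard} ∪
        {n | ∃ b : D.B, n = (D.bag b).ncard + (D.nodeAdh b).ncard})

end TreeCutDecomp

/-- The screewidth of `G`: the minimum width of a tree-cut decomposition of `G`. -/
noncomputable def screewidth [Finite V] (G : SimpleGraph V) : ℕ :=
  sInf {n | ∃ D : TreeCutDecomp G, D.width = n}

----------------  AUXILIARY  ----------------

namespace TreeCutDecomp

variable [Finite V] {G : SimpleGraph V}

/-- The defining set of the width. -/
def widthSet (D : TreeCutDecomp G) : Set ℕ :=
  {n | ∃ l ∈ D.T.edgeSet, n = (D.linkAdh l).ncard} ∪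
  {n | ∃ b : D.B, n = (D.bag b).ncard + (D.nodeAdh b).ncard}

lemma width_eq_sSup (D : TreeCutDecomp G) : D.width = sSup D.widthSet := rfl

lemma widthSet_bddAbove (D : TreeCutDecomp G) : BddAbove D.widthSet := by
  refine ⟨Nat.card V + Nat.card (Sym2 V), ?_⟩
  rintro n (⟨l, _, rfl⟩ | ⟨b, rfl⟩)
  · calc (D.linkAdh l).ncard ≤ (Set.univ : Set (Sym2 V)).ncard :=
        Set.ncard_le_ncard (Set.subset_univ _) Set.finite_univ
      _ = Nat.card (Sym2 V) := Set.ncard_univ _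
      _ ≤ _ := Nat.le_add_left _ _
  · gcongr
    · calc (D.bag b).ncard ≤ (Set.univ : Set V).ncard :=
        Set.ncard_le_ncard (Set.subset_univ _) Set.finite_univ
        _ = Nat.card V := Set.ncard_univ _
    · calc (D.nodeAdh b).ncard ≤ (Set.univ : Set (Sym2 V)).ncard :=
        Set.ncard_le_ncard (Set.subset_univ _) Set.finite_univ
        _ = Nat.card (Sym2 V) := Set.ncard_univ _

lemma linkAdh_ncard_le_width (D : TreeCutDecomp G) {l : Sym2 D.B} (hl : l ∈ D.T.edgeSet) :
    (D.linkAdh l).ncard ≤ D.width :=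
  le_csSup D.widthSet_bddAbove (Or.inl ⟨l, hl, rfl⟩)

lemma node_le_width (D : TreeCutDecomp G) (b : D.B) :
    (D.bag b).ncard + (D.nodeAdh b).ncard ≤ D.width :=
  le_csSup D.widthSet_bddAbove (Or.inr ⟨b, rfl⟩)

lemma width_le (D : TreeCutDecomp G) {w : ℕ}
    (h1 : ∀ l ∈ D.T.edgeSet, (D.linkAdh l).ncard ≤ w)
    (h2 : ∀ b : D.B, (D.bag b).ncard + (D.nodeAdh b).ncard ≤ w) :
    D.width ≤ w := by
  rcases isEmpty_or_nonempty D.B with hB | hB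
  · rw [width_eq_sSup]
    have : D.widthSet = ∅ := by
      ext n
      simp only [widthSet, Set.mem_union, Set.mem_setOf_eq, Set.mem_empty_iff_false, iff_false]
      rintro (⟨l, hl, _⟩ | ⟨b, _⟩)
      · induction l using Sym2.inductionOn with
        | hf x y => exact IsEmpty.false x
      · exact IsEmpty.false b
    rw [this]
    simp
  · refine csSup_le ⟨_, Or.inr ⟨hB.some, rfl⟩⟩ ?_
    rintro n (⟨l, hl, rfl⟩ | ⟨b, rfl⟩)
    · exact h1 l hl
    · exact h2 b

open scoped Classical in
/-- The contribution of a node to the measure `mu`. -/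
noncomputable def muF (D : TreeCutDecomp G) (b : D.B) : ℕ :=
  if D.bag b = ∅ then
    (((D.T.neighborSet b).ncard - 3) + (3 - (D.T.neighborSet b).ncard)) else 0

/-- The measure: the sum over empty-bag nodes `b` of `|deg b - 3|`. -/
noncomputable def mu (D : TreeCutDecomp G) : ℕ := ∑ᶠ b : D.B, D.muF b

end TreeCutDecomp

/-- The trivial one-node decomposition. -/
noncomputable def trivialDecomp [Finite V] (G : SimpleGraph V) : TreeCutDecomp G where
  B := Unit
  finB := inferInstance
  T := ⊥
  isTree := by
    constructor
    · exact Connected.mk (fun u v => by cases u; cases v; exact Reachable.refl _)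
    · exact isAcyclic_bot
  bag := fun _ => Set.univ
  disj := fun u v huv => absurd (Subsingleton.elim u v) huv
  covers := fun v => ⟨(), Set.mem_univ v⟩

lemma screewidth_set_nonempty [Finite V] (G : SimpleGraph V) :
    {n | ∃ D : TreeCutDecomp G, D.width = n}.Nonempty :=
  ⟨_, trivialDecomp G, rfl⟩

lemma exists_width_eq_screewidth [Finite V] (G : SimpleGraph V) :
    ∃ D : TreeCutDecomp G, D.width = screewidth G :=
  Nat.sInf_mem (screewidth_set_nonempty G)

lemma screewidth_le_width [Finite V] {G : SimpleGraph V} (D : TreeCutDecomp G) :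
    screewidth G ≤ D.width :=
  Nat.sInf_le ⟨D, rfl⟩

namespace TreeCutDecomp

variable [Finite V] {G : SimpleGraph V}

lemma surgery_leaf (D : TreeCutDecomp G) (b₀ : D.B) (hb : D.bag b₀ = ∅)
    (hdeg : (D.T.neighborSet b₀).ncard = 1) :
    ∃ D' : TreeCutDecomp G, D'.width ≤ D.width ∧ D'.mu < D.mu := by
  classical
  haveI := D.finB
  obtain ⟨a₀, ha⟩ := Set.ncard_eq_one.mp hdeg
  have hnb : ∀ c, D.T.Adj b₀ c → c = a₀ := fun c h => by
    have : c ∈ D.T.neighborSet b₀ := h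
    rwa [ha, Set.mem_singleton_iff] at this
  have hab : D.T.Adj b₀ a₀ := by
    show a₀ ∈ D.T.neighborSet b₀
    rw [ha]; exact rfl
  have ha0 : a₀ ≠ b₀ := fun h => D.T.irrefl (h ▸ hab)
  let T' : SimpleGraph {x : D.B // x ≠ b₀} := SimpleGraph.comap Subtype.val D.T
  -- walk transfer from T to T'
  have trans : ∀ (n : ℕ) {u v : D.B} (p : D.T.Walk u v) (hu : u ≠ b₀) (hv : v ≠ b₀),
      p.length ≤ n → ∃ p' : T'.Walk ⟨u, hu⟩ ⟨v, hv⟩,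
        (∀ e ∈ p'.edges, e.map Subtype.val ∈ p.edges) ∧
        (∀ x ∈ p'.support, x.1 ∈ p.support) := by
    intro n
    induction n with
    | zero =>
      intro u v p hu hv hlen
      cases p with
      | nil => exact ⟨Walk.nil, by simp, by simp⟩
      | cons h q => simp [Walk.length_cons] at hlen
    | succ n ih =>
      intro u v p hu hv hlen
      cases p with
      | nil => exact ⟨Walk.nil, by simp, by simp⟩
      | cons h q =>
        rename_i x
        by_cases hx : x = b₀
        · subst hx
          have hu' : u = a₀ := hnb u h.symm
          cases q with
          | nil => exact absurd rfl hv
          | cons h₂ q₂ =>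
            rename_i y
            have hy : y = a₀ := hnb y h₂
            subst hy; subst hu'
            have hlen₂ : q₂.length ≤ n := by
              simp only [Walk.length_cons] at hlen ⊢; omega
            obtain ⟨p', he, hs⟩ := ih q₂ hu hv hlen₂
            refine ⟨p', fun e hee => ?_, fun z hz => ?_⟩
            · have := he e hee
              simp only [Walk.edges_cons, List.mem_cons] at this ⊢
              tauto
            · have := hs z hz
              simp only [Walk.support_cons, List.mem_cons] at this ⊢
              tauto
        · have hlen₂ : q.length ≤ n := by
            simp only [Walk.length_cons] at hlen; omega
          obtain ⟨p', he, hs⟩ := ih q hx hv hlen₂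
          refine ⟨Walk.cons (show T'.Adj ⟨u, hu⟩ ⟨x, hx⟩ from h) p', ?_, ?_⟩
          · intro e hee
            rw [Walk.edges_cons, List.mem_cons] at hee
            rcases hee with rfl | hee
            · simp [Sym2.map_pair_eq, Walk.edges_cons]
            · simp only [Walk.edges_cons, List.mem_cons]
              exact Or.inr (he e hee)
          · intro z hz
            rw [Walk.support_cons, List.mem_cons] at hz
            rcases hz with rfl | hz
            · simp [Walk.support_cons]
            · simp only [Walk.support_cons, List.mem_cons]
              exact Or.inr (hs z hz)
  haveI : Nonempty {x : D.B // x ≠ b₀} := ⟨⟨a₀, ha0⟩⟩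
  let D' : TreeCutDecomp G :=
    { B := {x : D.B // x ≠ b₀}
      finB := inferInstance
      T := T'
      isTree := by
        constructor
        · exact Connected.mk (fun x y => by
            obtain ⟨p⟩ := D.isTree.isConnected.preconnected x.1 y.1
            obtain ⟨p', -, -⟩ := trans p.length p x.2 y.2 le_rfl
            exact ⟨p'⟩)
        · intro x c hc
          exact D.isTree.IsAcyclic (c.map ⟨Subtype.val, fun h => h⟩)
            (hc.map Subtype.val_injective)
      bag := fun x => D.bag x.1
      disj := fun x y hxy => D.disj (fun h : x.1 = y.1 => hxy (Subtype.ext h))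
      covers := fun v => by
        obtain ⟨b, hbv⟩ := D.covers v
        have hbne : b ≠ b₀ := fun h => by rw [h, hb] at hbv; exact hbv
        exact ⟨⟨b, hbne⟩, hbv⟩ }
  refine ⟨D', ?_, ?_⟩
  · -- width bound
    apply width_le
    · intro l hl
      induction l using Sym2.inductionOn with
      | hf x y =>
        have hxy : D.T.Adj x.1 y.1 := hl
        have hsub : D'.linkAdh s(x, y) ⊆ D.linkAdh s(x.1, y.1) := by
          rintro e ⟨heG, v, w, bb, dd, rfl, hvb, hwd, hall⟩
          refine ⟨heG, v, w, bb.1, dd.1, rfl, hvb, hwd, fun p => ?_⟩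
          obtain ⟨p', he, -⟩ := trans p.length p bb.2 dd.2 le_rfl
          have := he _ (hall p')
          rwa [Sym2.map_pair_eq] at this
        calc (D'.linkAdh s(x, y)).ncard ≤ (D.linkAdh s(x.1, y.1)).ncard :=
              Set.ncard_le_ncard hsub (Set.toFinite _)
          _ ≤ D.width := D.linkAdh_ncard_le_width hxy
    · intro x
      have hsub : D'.nodeAdh x ⊆ D.nodeAdh x.1 := by
        rintro e ⟨heG, v, w, bb, dd, rfl, hvb, hwd, hbb, hdd, hall⟩
        refine ⟨heG, v, w, bb.1, dd.1, rfl, hvb, hwd,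
          fun h => hbb (Subtype.ext h), fun h => hdd (Subtype.ext h), fun p => ?_⟩
        obtain ⟨p', -, hs⟩ := trans p.length p bb.2 dd.2 le_rfl
        exact hs _ (hall p')
      calc (D'.bag x).ncard + (D'.nodeAdh x).ncard
          ≤ (D.bag x.1).ncard + (D.nodeAdh x.1).ncard :=
            Nat.add_le_add le_rfl (Set.ncard_le_ncard hsub (Set.toFinite _))
        _ ≤ D.width := D.node_le_width x.1
  · -- mu decreases
    haveI fB := Fintype.ofFinite D.B
    haveI fB' : Fintype {x : D.B // x ≠ b₀} := Fintype.ofFinite _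
    have hdeg' : ∀ x : {x : D.B // x ≠ b₀},
        (T'.neighborSet x).ncard = ((D.T.neighborSet x.1) \ {b₀}).ncard := by
      intro x
      have himg : Subtype.val '' (T'.neighborSet x) = D.T.neighborSet x.1 \ {b₀} := by
        ext c
        constructor
        · rintro ⟨y, hy, rfl⟩; exact ⟨hy, y.2⟩
        · rintro ⟨hc, hcb⟩; exact ⟨⟨c, hcb⟩, hc, rfl⟩
      rw [← Set.ncard_image_of_injective _ Subtype.val_injective, himg]
    have hbagD : ∀ x : {x : D.B // x ≠ b₀}, D'.bag x = D.bag x.1 := fun _ => rfl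
    have hnsD : ∀ x : {x : D.B // x ≠ b₀}, D'.T.neighborSet x = T'.neighborSet x :=
      fun _ => rfl
    have key : ∀ x : {x : D.B // x ≠ b₀},
        D'.muF x ≤ D.muF x.1 + (if x.1 = a₀ then 1 else 0) := by
      intro x
      have hdx := hdeg' x
      simp only [muF, hbagD, hnsD, hdx]
      by_cases hxa : x.1 = a₀
      · have hmem : b₀ ∈ D.T.neighborSet x.1 := by rw [hxa]; exact hab.symm
        rw [Set.ncard_diff_singleton_of_mem hmem, if_pos hxa]
        split_ifs with hbag
        · omega
        · omega
      · have hmem : b₀ ∉ D.T.neighborSet x.1 := fun h => hxa (hnb _ (D.T.adj_symm h))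
        rw [Set.diff_singleton_eq_self hmem, if_neg hxa]
        split_ifs with hbag
        · omega
        · omega
    have hmu' : D'.mu = ∑ x : {x : D.B // x ≠ b₀}, D'.muF x := finsum_eq_sum_of_fintype _
    have hmuD : D.mu = ∑ b : D.B, D.muF b := finsum_eq_sum_of_fintype _
    have hsplit : ∑ x ∈ Finset.univ.erase b₀, D.muF x + D.muF b₀ = ∑ b : D.B, D.muF b :=
      Finset.sum_erase_add _ _ (Finset.mem_univ b₀)
    have hsubty : ∑ x ∈ Finset.univ.erase b₀, D.muF x
        = ∑ x : {x : D.B // x ≠ b₀}, D.muF x.1 :=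
      Finset.sum_subtype _ (fun x => by simp [Finset.mem_erase]) _
    have hfb0 : D.muF b₀ = 2 := by
      simp [muF, hb, hdeg]
    have hcond : ∀ x : {x : D.B // x ≠ b₀},
        (x.1 = a₀) = (x = (⟨a₀, ha0⟩ : {x : D.B // x ≠ b₀})) := fun x =>
      propext ⟨fun h => Subtype.ext h, fun h => by rw [h]⟩
    have hone : ∑ x : {x : D.B // x ≠ b₀},
        (if x.1 = a₀ then 1 else 0) = 1 := by
      simp_rw [hcond]
      rw [Finset.sum_ite_eq' Finset.univ _ (fun _ => 1)]
      simp
    calc D'.mu = ∑ x : {x : D.B // x ≠ b₀}, D'.muF x := hmu'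
      _ ≤ ∑ x : {x : D.B // x ≠ b₀},
            (D.muF x.1 + (if x.1 = a₀ then 1 else 0)) :=
          Finset.sum_le_sum (fun x _ => key x)
      _ = ∑ x : {x : D.B // x ≠ b₀}, D.muF x.1 + 1 := by rw [Finset.sum_add_distrib, hone]
      _ < D.mu := by rw [hmuD, ← hsplit, ← hsubty, hfb0]; omega

end TreeCutDecomp

namespace TreeCutDecomp

variable [Finite V] {G : SimpleGraph V}

lemma surgery_contract (D : TreeCutDecomp G) (b₀ : D.B) (hb : D.bag b₀ = ∅)
    (hdeg : (D.T.neighborSet b₀).ncard = 2) :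
    ∃ D' : TreeCutDecomp G, D'.width ≤ D.width ∧ D'.mu < D.mu := by
  classical
  haveI := D.finB
  obtain ⟨a₁, a₂, h12, ha⟩ := Set.ncard_eq_two.mp hdeg
  have hnb : ∀ c, D.T.Adj b₀ c → c = a₁ ∨ c = a₂ := fun c h => by
    have : c ∈ D.T.neighborSet b₀ := h
    rw [ha] at this
    exact this
  have hab₁ : D.T.Adj b₀ a₁ := by
    show a₁ ∈ D.T.neighborSet b₀
    rw [ha]; exact Or.inl rfl
  have hab₂ : D.T.Adj b₀ a₂ := by
    show a₂ ∈ D.T.neighborSet b₀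
    rw [ha]; exact Or.inr rfl
  have ha1 : a₁ ≠ b₀ := fun h => D.T.irrefl (h ▸ hab₁)
  have ha2 : a₂ ≠ b₀ := fun h => D.T.irrefl (h ▸ hab₂)
  -- two-step walks through b₀ are paths
  have mkpath : ∀ {c₁ c₂ : D.B} (e₁ : D.T.Adj c₁ b₀) (e₂ : D.T.Adj b₀ c₂), c₁ ≠ c₂ →
      (Walk.cons e₁ (Walk.cons e₂ Walk.nil)).IsPath := by
    intro c₁ c₂ e₁ e₂ hne
    rw [Walk.isPath_def]
    have hc1 : c₁ ≠ b₀ := fun h => D.T.irrefl (h ▸ e₁)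
    have hc2 : b₀ ≠ c₂ := fun h => D.T.irrefl (h ▸ e₂)
    simp [Walk.support_cons, List.nodup_cons, hc1, hc2, hne]
  let P2 : D.T.Walk a₁ a₂ := Walk.cons hab₁.symm (Walk.cons hab₂ Walk.nil)
  have hP2 : P2.IsPath := mkpath hab₁.symm hab₂ h12
  have hA12 : ¬ D.T.Adj a₁ a₂ := by
    intro h
    have := D.isTree.IsAcyclic.path_unique (Path.singleton h) ⟨P2, hP2⟩
    have hsupp : b₀ ∈ ((Path.singleton h : D.T.Path a₁ a₂) : D.T.Walk a₁ a₂).support := by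
      rw [this]
      simp [P2, Walk.support_cons]
    simp only [Path.singleton, Walk.support_cons, Walk.support_nil, List.mem_cons,
      List.mem_singleton, List.not_mem_nil, or_false] at hsupp
    rcases hsupp with h' | h'
    · exact ha1 h'.symm
    · exact ha2 h'.symm
  let T' : SimpleGraph {x : D.B // x ≠ b₀} :=
    { Adj := fun x y => D.T.Adj x.1 y.1 ∨ (x.1 = a₁ ∧ y.1 = a₂) ∨ (x.1 = a₂ ∧ y.1 = a₁)
      symm := by
        constructor
        rintro x y (h | ⟨h1, h2⟩ | ⟨h1, h2⟩)
        · exact Or.inl h.symm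
        · exact Or.inr (Or.inr ⟨h2, h1⟩)
        · exact Or.inr (Or.inl ⟨h2, h1⟩)
      loopless := by
        constructor
        rintro x (h | ⟨h1, h2⟩ | ⟨h1, h2⟩)
        · exact D.T.irrefl h
        · exact h12 (h1 ▸ h2 ▸ rfl)
        · exact h12 (h2 ▸ h1 ▸ rfl) }
  let A₁ : {x : D.B // x ≠ b₀} := ⟨a₁, ha1⟩
  let A₂ : {x : D.B // x ≠ b₀} := ⟨a₂, ha2⟩
  -- transfer: walks in T yield walks in T'
  have trans : ∀ (n : ℕ) {u v : D.B} (p : D.T.Walk u v) (hu : u ≠ b₀) (hv : v ≠ b₀),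
      p.length ≤ n → ∃ p' : T'.Walk ⟨u, hu⟩ ⟨v, hv⟩,
        (∀ e ∈ p'.edges, e.map Subtype.val ∈ p.edges ∨ (e = s(A₁, A₂) ∧ b₀ ∈ p.support)) ∧
        (∀ x ∈ p'.support, x.1 ∈ p.support) := by
    intro n
    induction n with
    | zero =>
      intro u v p hu hv hlen
      cases p with
      | nil => exact ⟨Walk.nil, by simp, by simp⟩
      | cons h q => simp [Walk.length_cons] at hlen
    | succ n ih =>
      intro u v p hu hv hlen
      cases p with
      | nil => exact ⟨Walk.nil, by simp, by simp⟩
      | cons h q =>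
        rename_i x
        by_cases hx : x = b₀
        · cases q with
          | nil => exact absurd hx hv
          | cons h₂ q₂ =>
            rename_i y
            have hxb : D.T.Adj b₀ u := hx ▸ h.symm
            have hxy : D.T.Adj b₀ y := hx ▸ h₂
            have hy : y ≠ b₀ := fun hh => D.T.irrefl (hh ▸ hxy)
            have hb0p : b₀ ∈ (Walk.cons h (Walk.cons h₂ q₂)).support := by
              rw [Walk.support_cons, List.mem_cons]
              exact Or.inr (by
                rw [Walk.support_cons, List.mem_cons]
                exact Or.inl hx.symm)
            have hlen₂ : q₂.length ≤ n := by
              simp only [Walk.length_cons] at hlen ⊢; omega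
            by_cases huy : u = y
            · obtain ⟨p', he, hs⟩ := ih q₂ (huy ▸ hu) hv hlen₂
              have hcast : (⟨u, hu⟩ : {x : D.B // x ≠ b₀}) = ⟨y, hy⟩ := Subtype.ext huy
              refine ⟨hcast ▸ p', fun e hee => ?_, fun z hz => ?_⟩
              · have hee' : e ∈ p'.edges := by
                  cases hcast; exact hee
                rcases he e hee' with h' | ⟨h', -⟩
                · exact Or.inl (by
                    rw [Walk.edges_cons, List.mem_cons]
                    exact Or.inr (by rw [Walk.edges_cons, List.mem_cons]; exact Or.inr h'))
                · exact Or.inr ⟨h', hb0p⟩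
              · have hz' : z ∈ p'.support := by
                  cases hcast; exact hz
                have := hs z hz'
                rw [Walk.support_cons, List.mem_cons]
                exact Or.inr (by
                  rw [Walk.support_cons, List.mem_cons]
                  exact Or.inr this)
            · -- u ≠ y, both are neighbors of b₀
              obtain ⟨p', he, hs⟩ := ih q₂ hy hv hlen₂
              have hadj : T'.Adj ⟨u, hu⟩ ⟨y, hy⟩ := by
                rcases hnb u hxb with h' | h' <;> rcases hnb y hxy with h'' | h''
                · exact absurd (h' ▸ h'' ▸ rfl : u = y) huy
                · exact Or.inr (Or.inl ⟨h', h''⟩)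
                · exact Or.inr (Or.inr ⟨h', h''⟩)
                · exact absurd (h' ▸ h'' ▸ rfl : u = y) huy
              refine ⟨Walk.cons hadj p', fun e hee => ?_, fun z hz => ?_⟩
              · rw [Walk.edges_cons, List.mem_cons] at hee
                rcases hee with rfl | hee
                · refine Or.inr ⟨?_, hb0p⟩
                  rcases hnb u hxb with h' | h' <;> rcases hnb y hxy with h'' | h''
                  · exact absurd (h' ▸ h'' ▸ rfl : u = y) huy
                  · rw [show (⟨u, hu⟩ : {x : D.B // x ≠ b₀}) = A₁ from Subtype.ext h',
                      show (⟨y, hy⟩ : {x : D.B // x ≠ b₀}) = A₂ from Subtype.ext h'']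
                  · rw [show (⟨u, hu⟩ : {x : D.B // x ≠ b₀}) = A₂ from Subtype.ext h',
                      show (⟨y, hy⟩ : {x : D.B // x ≠ b₀}) = A₁ from Subtype.ext h'']
                    exact Sym2.eq_swap
                  · exact absurd (h' ▸ h'' ▸ rfl : u = y) huy
                · rcases he e hee with h' | ⟨h', -⟩
                  · exact Or.inl (by
                      rw [Walk.edges_cons, List.mem_cons]
                      exact Or.inr (by rw [Walk.edges_cons, List.mem_cons]; exact Or.inr h'))
                  · exact Or.inr ⟨h', hb0p⟩
              · rw [Walk.support_cons, List.mem_cons] at hz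
                rcases hz with rfl | hz
                · rw [Walk.support_cons, List.mem_cons]
                  exact Or.inl rfl
                · have := hs z hz
                  rw [Walk.support_cons, List.mem_cons]
                  exact Or.inr (by
                    rw [Walk.support_cons, List.mem_cons]
                    exact Or.inr this)
        · have hlen₂ : q.length ≤ n := by
            simp only [Walk.length_cons] at hlen; omega
          obtain ⟨p', he, hs⟩ := ih q hx hv hlen₂
          refine ⟨Walk.cons (Or.inl h : T'.Adj ⟨u, hu⟩ ⟨x, hx⟩) p', fun e hee => ?_,
            fun z hz => ?_⟩
          · rw [Walk.edges_cons, List.mem_cons] at hee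
            rcases hee with rfl | hee
            · exact Or.inl (by
                rw [Sym2.map_pair_eq, Walk.edges_cons, List.mem_cons]
                exact Or.inl rfl)
            · rcases he e hee with h' | ⟨h', hsup⟩
              · exact Or.inl (by
                  rw [Walk.edges_cons, List.mem_cons]
                  exact Or.inr h')
              · exact Or.inr ⟨h', by
                  rw [Walk.support_cons, List.mem_cons]
                  exact Or.inr hsup⟩
          · rw [Walk.support_cons, List.mem_cons] at hz
            rcases hz with rfl | hz
            · rw [Walk.support_cons, List.mem_cons]
              exact Or.inl rfl
            · rw [Walk.support_cons, List.mem_cons]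
              exact Or.inr (hs z hz)
  -- expansion: walks in T' yield walks in T
  have expand : ∀ {x y : {x : D.B // x ≠ b₀}} (p' : T'.Walk x y),
      ∃ W : D.T.Walk x.1 y.1,
        (∀ e ∈ W.edges, (∃ e' ∈ p'.edges, e = e'.map Subtype.val) ∨
          ((e = s(a₁, b₀) ∨ e = s(b₀, a₂)) ∧ s(A₁, A₂) ∈ p'.edges)) ∧
        (∀ z ∈ W.support, (∃ x' ∈ p'.support, z = x'.1) ∨
          (z = b₀ ∧ s(A₁, A₂) ∈ p'.edges)) := by
    intro x y p'
    induction p' with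
    | nil =>
      rename_i u0
      refine ⟨Walk.nil, by simp, fun z hz => ?_⟩
      rw [Walk.support_nil, List.mem_singleton] at hz
      exact Or.inl ⟨u0, by rw [Walk.support_nil]; exact List.mem_singleton_self _, hz⟩
    | cons h' q' ih =>
      rename_i x0 z0 w0
      obtain ⟨W, heW, hsW⟩ := ih
      have hcopy := h'
      have hedge0 : (Walk.cons h' q').edges = s(x0, z0) :: q'.edges := Walk.edges_cons _ _
      have hsupp0 : (Walk.cons h' q').support = x0 :: q'.support := Walk.support_cons _ _
      rcases hcopy with hT | ⟨h1, h2⟩ | ⟨h1, h2⟩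
      · refine ⟨Walk.cons hT W, fun e hee => ?_, fun zz hzz => ?_⟩
        · rw [Walk.edges_cons, List.mem_cons] at hee
          rcases hee with rfl | hee
          · exact Or.inl ⟨s(x0, z0), by rw [hedge0]; exact List.mem_cons_self,
              by rw [Sym2.map_pair_eq]⟩
          · rcases heW e hee with ⟨e', he', hh⟩ | ⟨hh, hmem⟩
            · exact Or.inl ⟨e', by rw [hedge0]; exact List.mem_cons_of_mem _ he', hh⟩
            · exact Or.inr ⟨hh, by rw [hedge0]; exact List.mem_cons_of_mem _ hmem⟩
        · rw [Walk.support_cons, List.mem_cons] at hzz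
          rcases hzz with rfl | hzz
          · exact Or.inl ⟨x0, by rw [hsupp0]; exact List.mem_cons_self, rfl⟩
          · rcases hsW zz hzz with ⟨x', hx', hh⟩ | ⟨hh, hmem⟩
            · exact Or.inl ⟨x', by rw [hsupp0]; exact List.mem_cons_of_mem _ hx', hh⟩
            · exact Or.inr ⟨hh, by rw [hedge0]; exact List.mem_cons_of_mem _ hmem⟩
      · -- x0.1 = a₁, z0.1 = a₂ : expand through b₀
        have e₁ : D.T.Adj x0.1 b₀ := by rw [h1]; exact hab₁.symm
        have e₂ : D.T.Adj b₀ z0.1 := by rw [h2]; exact hab₂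
        have hnew : s(A₁, A₂) ∈ (Walk.cons h' q').edges := by
          rw [hedge0, show s(A₁, A₂) = s(x0, z0) by
            rw [show x0 = A₁ from Subtype.ext h1, show z0 = A₂ from Subtype.ext h2]]
          exact List.mem_cons_self
        refine ⟨Walk.cons e₁ (Walk.cons e₂ W), fun e hee => ?_, fun zz hzz => ?_⟩
        · rw [Walk.edges_cons, List.mem_cons] at hee
          rcases hee with rfl | hee
          · exact Or.inr ⟨Or.inl (by rw [h1]), hnew⟩
          · rw [Walk.edges_cons, List.mem_cons] at hee
            rcases hee with rfl | hee
            · exact Or.inr ⟨Or.inr (by rw [h2]), hnew⟩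
            · rcases heW e hee with ⟨e', he', hh⟩ | ⟨hh, -⟩
              · exact Or.inl ⟨e', by rw [hedge0]; exact List.mem_cons_of_mem _ he', hh⟩
              · exact Or.inr ⟨hh, hnew⟩
        · rw [Walk.support_cons, List.mem_cons] at hzz
          rcases hzz with rfl | hzz
          · exact Or.inl ⟨x0, by rw [hsupp0]; exact List.mem_cons_self, rfl⟩
          · rw [Walk.support_cons, List.mem_cons] at hzz
            rcases hzz with rfl | hzz
            · exact Or.inr ⟨rfl, hnew⟩
            · rcases hsW zz hzz with ⟨x', hx', hh⟩ | ⟨hh, -⟩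
              · exact Or.inl ⟨x', by rw [hsupp0]; exact List.mem_cons_of_mem _ hx', hh⟩
              · exact Or.inr ⟨hh, hnew⟩
      · -- x0.1 = a₂, z0.1 = a₁ : expand through b₀ (other direction)
        have e₁ : D.T.Adj x0.1 b₀ := by rw [h1]; exact hab₂.symm
        have e₂ : D.T.Adj b₀ z0.1 := by rw [h2]; exact hab₁
        have hnew : s(A₁, A₂) ∈ (Walk.cons h' q').edges := by
          rw [hedge0, show s(A₁, A₂) = s(x0, z0) by
            rw [show x0 = A₂ from Subtype.ext h1, show z0 = A₁ from Subtype.ext h2]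
            exact Sym2.eq_swap]
          exact List.mem_cons_self
        refine ⟨Walk.cons e₁ (Walk.cons e₂ W), fun e hee => ?_, fun zz hzz => ?_⟩
        · rw [Walk.edges_cons, List.mem_cons] at hee
          rcases hee with rfl | hee
          · exact Or.inr ⟨Or.inr (by rw [h1]; exact Sym2.eq_swap), hnew⟩
          · rw [Walk.edges_cons, List.mem_cons] at hee
            rcases hee with rfl | hee
            · exact Or.inr ⟨Or.inl (by rw [h2]; exact Sym2.eq_swap), hnew⟩
            · rcases heW e hee with ⟨e', he', hh⟩ | ⟨hh, -⟩
              · exact Or.inl ⟨e', by rw [hedge0]; exact List.mem_cons_of_mem _ he', hh⟩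
              · exact Or.inr ⟨hh, hnew⟩
        · rw [Walk.support_cons, List.mem_cons] at hzz
          rcases hzz with rfl | hzz
          · exact Or.inl ⟨x0, by rw [hsupp0]; exact List.mem_cons_self, rfl⟩
          · rw [Walk.support_cons, List.mem_cons] at hzz
            rcases hzz with rfl | hzz
            · exact Or.inr ⟨rfl, hnew⟩
            · rcases hsW zz hzz with ⟨x', hx', hh⟩ | ⟨hh, -⟩
              · exact Or.inl ⟨x', by rw [hsupp0]; exact List.mem_cons_of_mem _ hx', hh⟩
              · exact Or.inr ⟨hh, hnew⟩
  have sym2_val : ∀ (e' : Sym2 {x : D.B // x ≠ b₀}) (c₁ c₂ : {x : D.B // x ≠ b₀}),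
      e'.map Subtype.val = s(c₁.1, c₂.1) → e' = s(c₁, c₂) := by
    intro e' c₁ c₂
    induction e' using Sym2.inductionOn with
    | hf z₁ z₂ =>
      rw [Sym2.map_pair_eq, Sym2.eq_iff, Sym2.eq_iff]
      rintro (⟨h1, h2⟩ | ⟨h1, h2⟩)
      · exact Or.inl ⟨Subtype.ext h1, Subtype.ext h2⟩
      · exact Or.inr ⟨Subtype.ext h1, Subtype.ext h2⟩
  haveI : Nonempty {x : D.B // x ≠ b₀} := ⟨A₁⟩
  -- acyclicity of T'
  have hacyc : T'.IsAcyclic := by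
    intro u K hK
    cases K with
    | nil => exact hK.ne_nil rfl
    | cons h q =>
      rename_i y'
      rw [Walk.cons_isCycle_iff] at hK
      obtain ⟨hqp, hne⟩ := hK
      obtain ⟨W, heW, hsW⟩ := expand q
      rcases h with hT | ⟨h1, h2⟩ | ⟨h1, h2⟩
      · -- old edge closes the cycle
        have hPeq := D.isTree.IsAcyclic.path_unique ⟨W.bypass, W.bypass_isPath⟩
          (Path.singleton hT.symm)
        have : s(y'.1, u.1) ∈ W.bypass.edges := by
          rw [show W.bypass = ((Path.singleton hT.symm : D.T.Path y'.1 u.1) :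
            D.T.Walk y'.1 u.1) from congrArg Subtype.val hPeq]
          simp [Path.singleton]
        have hmem := W.edges_bypass_subset this
        rcases heW _ hmem with ⟨e', he', h'⟩ | ⟨h', hmem'⟩
        · -- e' must be s(y', u), contradicting hne
          have : e' = s(y', u) := sym2_val e' y' u h'.symm
          rw [this, Sym2.eq_swap] at he'
          exact hne he'
        · -- s(y'.1, u.1) = s(a₁,b₀) or s(b₀,a₂): impossible since y'.1, u.1 ≠ b₀
          rcases h' with h' | h' <;> rw [Sym2.eq_iff] at h' <;>
            rcases h' with ⟨hh1, hh2⟩ | ⟨hh1, hh2⟩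
          · exact u.2 hh2
          · exact y'.2 hh1
          · exact y'.2 hh1
          · exact u.2 hh2
      · -- the closing edge is the new edge, u.1 = a₁, y'.1 = a₂
        have hnewuy : s(A₁, A₂) = s(u, y') := by
          rw [show u = A₁ from Subtype.ext h1, show y' = A₂ from Subtype.ext h2]
        have hb0W : b₀ ∉ W.support := by
          intro hmem
          rcases hsW _ hmem with ⟨x', -, h'⟩ | ⟨-, hmem'⟩
          · exact x'.2 h'.symm
          · rw [hnewuy] at hmem'
            exact hne hmem'
        have e₁ : D.T.Adj y'.1 b₀ := by rw [h2]; exact hab₂.symm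
        have e₂ : D.T.Adj b₀ u.1 := by rw [h1]; exact hab₁
        let Q : D.T.Walk y'.1 u.1 := Walk.cons e₁ (Walk.cons e₂ Walk.nil)
        have hQ : Q.IsPath := mkpath e₁ e₂ (by
          rw [h1, h2]; exact Ne.symm h12)
        have hPeq := D.isTree.IsAcyclic.path_unique ⟨W.bypass, W.bypass_isPath⟩ ⟨Q, hQ⟩
        have : b₀ ∈ W.bypass.support := by
          rw [show W.bypass = Q from congrArg Subtype.val hPeq]
          simp [Q, Walk.support_cons]
        exact hb0W (W.support_bypass_subset this)
      · -- the closing edge is the new edge, u.1 = a₂, y'.1 = a₁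
        have hnewuy : s(A₁, A₂) = s(u, y') := by
          rw [show u = A₂ from Subtype.ext h1, show y' = A₁ from Subtype.ext h2]
          exact Sym2.eq_swap
        have hb0W : b₀ ∉ W.support := by
          intro hmem
          rcases hsW _ hmem with ⟨x', -, h'⟩ | ⟨-, hmem'⟩
          · exact x'.2 h'.symm
          · rw [hnewuy] at hmem'
            exact hne hmem'
        have e₁ : D.T.Adj y'.1 b₀ := by rw [h2]; exact hab₁.symm
        have e₂ : D.T.Adj b₀ u.1 := by rw [h1]; exact hab₂
        let Q : D.T.Walk y'.1 u.1 := Walk.cons e₁ (Walk.cons e₂ Walk.nil)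
        have hQ : Q.IsPath := mkpath e₁ e₂ (by
          rw [h1, h2]; exact h12)
        have hPeq := D.isTree.IsAcyclic.path_unique ⟨W.bypass, W.bypass_isPath⟩ ⟨Q, hQ⟩
        have : b₀ ∈ W.bypass.support := by
          rw [show W.bypass = Q from congrArg Subtype.val hPeq]
          simp [Q, Walk.support_cons]
        exact hb0W (W.support_bypass_subset this)
  -- the new decomposition
  let D' : TreeCutDecomp G :=
    { B := {x : D.B // x ≠ b₀}
      finB := inferInstance
      T := T'
      isTree := by
        constructor
        · exact Connected.mk (fun x y => by
            obtain ⟨p⟩ := D.isTree.isConnected.preconnected x.1 y.1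
            obtain ⟨p', -, -⟩ := trans p.length p x.2 y.2 le_rfl
            exact ⟨p'⟩)
        · exact hacyc
      bag := fun x => D.bag x.1
      disj := fun x y hxy => D.disj (fun h : x.1 = y.1 => hxy (Subtype.ext h))
      covers := fun v => by
        obtain ⟨b, hbv⟩ := D.covers v
        have hbne : b ≠ b₀ := fun h => by rw [h, hb] at hbv; exact hbv
        exact ⟨⟨b, hbne⟩, hbv⟩ }
  refine ⟨D', ?_, ?_⟩
  · -- width bound
    apply width_le
    · intro l hl
      induction l using Sym2.inductionOn with
      | hf x y =>
        by_cases hT : D.T.Adj x.1 y.1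
        · -- old link
          have hsub : D'.linkAdh s(x, y) ⊆ D.linkAdh s(x.1, y.1) := by
            rintro e ⟨heG, v, w, bb, dd, rfl, hvb, hwd, hall⟩
            refine ⟨heG, v, w, bb.1, dd.1, rfl, hvb, hwd, fun p => ?_⟩
            obtain ⟨p', he, -⟩ := trans p.length p bb.2 dd.2 le_rfl
            rcases he _ (hall p') with h' | ⟨h', -⟩
            · rwa [Sym2.map_pair_eq] at h'
            · exfalso
              have : x.1 = a₁ ∧ y.1 = a₂ ∨ x.1 = a₂ ∧ y.1 = a₁ := by
                have := congrArg (Sym2.map (Subtype.val)) h'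
                rw [Sym2.map_pair_eq, Sym2.map_pair_eq, Sym2.eq_iff] at this
                exact this
              rcases this with ⟨hh1, hh2⟩ | ⟨hh1, hh2⟩
              · exact hA12 (hh1 ▸ hh2 ▸ hT)
              · exact hA12 (hh1 ▸ hh2 ▸ hT.symm)
          calc (D'.linkAdh s(x, y)).ncard ≤ (D.linkAdh s(x.1, y.1)).ncard :=
                Set.ncard_le_ncard hsub (Set.toFinite _)
            _ ≤ D.width := D.linkAdh_ncard_le_width hT
        · -- the new link: bounded by the node adhesion of b₀
          have hsub : D'.linkAdh s(x, y) ⊆ D.nodeAdh b₀ := by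
            rintro e ⟨heG, v, w, bb, dd, rfl, hvb, hwd, hall⟩
            refine ⟨heG, v, w, bb.1, dd.1, rfl, hvb, hwd, bb.2, dd.2, fun p => ?_⟩
            obtain ⟨p', he, -⟩ := trans p.length p bb.2 dd.2 le_rfl
            rcases he _ (hall p') with h' | ⟨-, hsup⟩
            · exfalso
              rw [Sym2.map_pair_eq] at h'
              exact hT (p.edges_subset_edgeSet h')
            · exact hsup
          have hw := D.node_le_width b₀
          rw [hb] at hw
          simp only [Set.ncard_empty, Nat.zero_add] at hw
          calc (D'.linkAdh s(x, y)).ncard ≤ (D.nodeAdh b₀).ncard :=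
                Set.ncard_le_ncard hsub (Set.toFinite _)
            _ ≤ D.width := hw
    · intro x
      have hsub : D'.nodeAdh x ⊆ D.nodeAdh x.1 := by
        rintro e ⟨heG, v, w, bb, dd, rfl, hvb, hwd, hbb, hdd, hall⟩
        refine ⟨heG, v, w, bb.1, dd.1, rfl, hvb, hwd,
          fun h => hbb (Subtype.ext h), fun h => hdd (Subtype.ext h), fun p => ?_⟩
        obtain ⟨p', -, hs⟩ := trans p.length p bb.2 dd.2 le_rfl
        exact hs _ (hall p')
      calc (D'.bag x).ncard + (D'.nodeAdh x).ncard
          ≤ (D.bag x.1).ncard + (D.nodeAdh x.1).ncard :=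
            Nat.add_le_add le_rfl (Set.ncard_le_ncard hsub (Set.toFinite _))
        _ ≤ D.width := D.node_le_width x.1
  · -- mu decreases
    haveI fB := Fintype.ofFinite D.B
    haveI fB' : Fintype {x : D.B // x ≠ b₀} := Fintype.ofFinite _
    have hbagD : ∀ x : {x : D.B // x ≠ b₀}, D'.bag x = D.bag x.1 := fun _ => rfl
    have hnsD : ∀ x : {x : D.B // x ≠ b₀}, D'.T.neighborSet x = T'.neighborSet x :=
      fun _ => rfl
    -- degrees are unchanged
    have hdeg' : ∀ x : {x : D.B // x ≠ b₀},
        (T'.neighborSet x).ncard = (D.T.neighborSet x.1).ncard := by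
      intro x
      rw [← Set.ncard_image_of_injective (T'.neighborSet x) Subtype.val_injective]
      by_cases hx1 : x.1 = a₁
      · have himg : Subtype.val '' (T'.neighborSet x)
            = insert a₂ (D.T.neighborSet x.1 \ {b₀}) := by
          ext c
          simp only [Set.mem_image, Set.mem_insert_iff, Set.mem_diff,
            Set.mem_singleton_iff]
          constructor
          · rintro ⟨z, hz, rfl⟩
            rcases hz with hzT | ⟨hz1, hz2⟩ | ⟨hz1, hz2⟩
            · exact Or.inr ⟨hzT, z.2⟩
            · exact Or.inl hz2
            · exact absurd (hx1.symm.trans hz1) h12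
          · rintro (rfl | ⟨hcT, hcb⟩)
            · exact ⟨⟨c, ha2⟩, Or.inr (Or.inl ⟨hx1, rfl⟩), rfl⟩
            · exact ⟨⟨c, hcb⟩, Or.inl hcT, rfl⟩
        rw [himg, Set.ncard_insert_of_notMem (by
            rintro ⟨hc, -⟩
            exact hA12 (hx1 ▸ hc)) (Set.toFinite _),
          Set.ncard_diff_singleton_of_mem (by rw [hx1]; exact hab₁.symm)]
        have hpos : 0 < (D.T.neighborSet x.1).ncard := by
          rw [Set.ncard_pos (Set.toFinite _)]
          exact ⟨b₀, by rw [hx1]; exact hab₁.symm⟩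
        omega
      · by_cases hx2 : x.1 = a₂
        · have himg : Subtype.val '' (T'.neighborSet x)
              = insert a₁ (D.T.neighborSet x.1 \ {b₀}) := by
            ext c
            simp only [Set.mem_image, Set.mem_insert_iff, Set.mem_diff,
              Set.mem_singleton_iff]
            constructor
            · rintro ⟨z, hz, rfl⟩
              rcases hz with hzT | ⟨hz1, hz2⟩ | ⟨hz1, hz2⟩
              · exact Or.inr ⟨hzT, z.2⟩
              · exact absurd (hx2.symm.trans hz1) (Ne.symm h12)
              · exact Or.inl hz2
            · rintro (rfl | ⟨hcT, hcb⟩)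
              · exact ⟨⟨c, ha1⟩, Or.inr (Or.inr ⟨hx2, rfl⟩), rfl⟩
              · exact ⟨⟨c, hcb⟩, Or.inl hcT, rfl⟩
          rw [himg, Set.ncard_insert_of_notMem (by
              rintro ⟨hc, -⟩
              exact hA12 (hx2 ▸ hc).symm) (Set.toFinite _),
            Set.ncard_diff_singleton_of_mem (by rw [hx2]; exact hab₂.symm)]
          have hpos : 0 < (D.T.neighborSet x.1).ncard := by
            rw [Set.ncard_pos (Set.toFinite _)]
            exact ⟨b₀, by rw [hx2]; exact hab₂.symm⟩
          omega
        · have himg : Subtype.val '' (T'.neighborSet x) = D.T.neighborSet x.1 := by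
            ext c
            simp only [Set.mem_image]
            constructor
            · rintro ⟨z, hz, rfl⟩
              rcases hz with hzT | ⟨hz1, hz2⟩ | ⟨hz1, hz2⟩
              · exact hzT
              · exact absurd hz1 hx1
              · exact absurd hz1 hx2
            · intro hcT
              have hcb : c ≠ b₀ := by
                rintro rfl
                rcases hnb _ hcT.symm with h' | h'
                · exact hx1 h'
                · exact hx2 h'
              exact ⟨⟨c, hcb⟩, Or.inl hcT, rfl⟩
          rw [himg]
    have key : ∀ x : {x : D.B // x ≠ b₀}, D'.muF x = D.muF x.1 := by
      intro x
      simp only [muF, hbagD, hnsD, hdeg' x]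
    have hmu' : D'.mu = ∑ x : {x : D.B // x ≠ b₀}, D'.muF x := finsum_eq_sum_of_fintype _
    have hmuD : D.mu = ∑ b : D.B, D.muF b := finsum_eq_sum_of_fintype _
    have hsplit : ∑ x ∈ Finset.univ.erase b₀, D.muF x + D.muF b₀ = ∑ b : D.B, D.muF b :=
      Finset.sum_erase_add _ _ (Finset.mem_univ b₀)
    have hsubty : ∑ x ∈ Finset.univ.erase b₀, D.muF x
        = ∑ x : {x : D.B // x ≠ b₀}, D.muF x.1 :=
      Finset.sum_subtype _ (fun x => by simp [Finset.mem_erase]) _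
    have hfb0 : D.muF b₀ = 1 := by
      simp [muF, hb, hdeg]
    calc D'.mu = ∑ x : {x : D.B // x ≠ b₀}, D'.muF x := hmu'
      _ = ∑ x : {x : D.B // x ≠ b₀}, D.muF x.1 := Finset.sum_congr rfl (fun x _ => key x)
      _ < D.mu := by rw [hmuD, ← hsplit, ← hsubty, hfb0]; omega

end TreeCutDecomp

namespace TreeCutDecomp

variable [Finite V] {G : SimpleGraph V}

lemma surgery_split (D : TreeCutDecomp G) (b₀ : D.B) (hb : D.bag b₀ = ∅)
    (hdeg : 4 ≤ (D.T.neighborSet b₀).ncard) :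
    ∃ D' : TreeCutDecomp G, D'.width ≤ D.width ∧ D'.mu < D.mu := by
  classical
  haveI := D.finB
  obtain ⟨a₁, a₂, hm1, hm2, h12⟩ :=
    (Set.one_lt_ncard_iff (Set.toFinite _)).mp (by omega :
      1 < (D.T.neighborSet b₀).ncard)
  have hab₁ : D.T.Adj b₀ a₁ := hm1
  have hab₂ : D.T.Adj b₀ a₂ := hm2
  have ha1 : a₁ ≠ b₀ := fun h => D.T.irrefl (h ▸ hab₁)
  have ha2 : a₂ ≠ b₀ := fun h => D.T.irrefl (h ▸ hab₂)
  have mkpath : ∀ {c₁ c₂ : D.B} (e₁ : D.T.Adj c₁ b₀) (e₂ : D.T.Adj b₀ c₂), c₁ ≠ c₂ →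
      (Walk.cons e₁ (Walk.cons e₂ Walk.nil)).IsPath := by
    intro c₁ c₂ e₁ e₂ hne
    rw [Walk.isPath_def]
    have hc1 : c₁ ≠ b₀ := fun h => D.T.irrefl (h ▸ e₁)
    have hc2 : b₀ ≠ c₂ := fun h => D.T.irrefl (h ▸ e₂)
    simp [Walk.support_cons, List.nodup_cons, hc1, hc2, hne]
  -- the pairs of vertices whose link is re-routed through the new node
  let rem : D.B → D.B → Prop := fun x y =>
    (x = b₀ ∧ (y = a₁ ∨ y = a₂)) ∨ (y = b₀ ∧ (x = a₁ ∨ x = a₂))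
  have hremsymm : ∀ {x y}, rem x y → rem y x := by
    rintro x y (⟨h1, h2⟩ | ⟨h1, h2⟩)
    · exact Or.inr ⟨h1, h2⟩
    · exact Or.inl ⟨h1, h2⟩
  let cC : D.B ⊕ Unit := Sum.inr ()
  let T' : SimpleGraph (D.B ⊕ Unit) :=
    { Adj := fun x' y' => match x', y' with
        | .inl x, .inl y => D.T.Adj x y ∧ ¬ rem x y
        | .inl x, .inr _ => x = b₀ ∨ x = a₁ ∨ x = a₂
        | .inr _, .inl y => y = b₀ ∨ y = a₁ ∨ y = a₂
        | .inr _, .inr _ => False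
      symm := by
        constructor
        rintro (x | u) (y | v) h
        · exact ⟨h.1.symm, fun hr => h.2 (hremsymm hr)⟩
        · exact h
        · exact h
        · exact h
      loopless := by
        constructor
        rintro (x | u) h
        · exact D.T.irrefl h.1
        · exact h }
  have hadjC : ∀ x : D.B, T'.Adj (Sum.inl x) cC ↔ (x = b₀ ∨ x = a₁ ∨ x = a₂) := fun x =>
    Iff.rfl
  have hadjI : ∀ x y : D.B, T'.Adj (Sum.inl x) (Sum.inl y) ↔ (D.T.Adj x y ∧ ¬ rem x y) :=
    fun x y => Iff.rfl
  -- identification of Sym2's of `inl`s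
  have sym2_inl : ∀ (e : Sym2 D.B) (x y : D.B),
      e.map (Sum.inl : D.B → D.B ⊕ Unit) = s(Sum.inl x, Sum.inl y) → e = s(x, y) := by
    intro e x y
    induction e using Sym2.inductionOn with
    | hf z₁ z₂ =>
      rw [Sym2.map_pair_eq, Sym2.eq_iff, Sym2.eq_iff]
      rintro (⟨h1, h2⟩ | ⟨h1, h2⟩)
      · exact Or.inl ⟨Sum.inl_injective h1, Sum.inl_injective h2⟩
      · exact Or.inr ⟨Sum.inl_injective h1, Sum.inl_injective h2⟩
  have sym2_noc : ∀ (e : Sym2 D.B) (x' : D.B ⊕ Unit), e.map (Sum.inl : D.B → D.B ⊕ Unit) ≠ s(x', cC) := by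
    intro e x'
    induction e using Sym2.inductionOn with
    | hf z₁ z₂ =>
      rw [Sym2.map_pair_eq]
      intro h
      rw [Sym2.eq_iff] at h
      rcases h with ⟨h1, h2⟩ | ⟨h1, h2⟩
      · exact Sum.inl_ne_inr h2
      · exact Sum.inl_ne_inr h1
  -- transfer: walks in T yield walks in T'
  have trans : ∀ {u v : D.B} (p : D.T.Walk u v),
      ∃ p' : T'.Walk (Sum.inl u) (Sum.inl v),
        (∀ e' ∈ p'.edges, (∃ e ∈ p.edges, e' = e.map (Sum.inl : D.B → D.B ⊕ Unit)) ∨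
          ((e' = s(Sum.inl b₀, cC) ∨ e' = s(Sum.inl a₁, cC) ∨ e' = s(Sum.inl a₂, cC)) ∧
            b₀ ∈ p.support)) ∧
        (∀ x' ∈ p'.support, (∃ z ∈ p.support, x' = Sum.inl z) ∨
          (x' = cC ∧ b₀ ∈ p.support)) := by
    intro u v p
    induction p with
    | nil =>
      rename_i u0
      refine ⟨Walk.nil, by simp, fun z hz => ?_⟩
      rw [Walk.support_nil, List.mem_singleton] at hz
      exact Or.inl ⟨u0, by rw [Walk.support_nil]; exact List.mem_singleton_self _, hz⟩
    | cons h q ih =>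
      rename_i u0 x0 v0
      obtain ⟨p'', he, hs⟩ := ih
      have hsupp0 : (Walk.cons h q).support = u0 :: q.support := Walk.support_cons _ _
      have hedge0 : (Walk.cons h q).edges = s(u0, x0) :: q.edges := Walk.edges_cons _ _
      have hx0mem : x0 ∈ (Walk.cons h q).support := by
        rw [hsupp0]
        exact List.mem_cons_of_mem _ (Walk.start_mem_support q)
      by_cases hrem : rem u0 x0
      · -- re-route through the new node
        have hu0 : u0 = b₀ ∨ u0 = a₁ ∨ u0 = a₂ := by
          rcases hrem with ⟨h1, h2⟩ | ⟨h1, h2⟩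
          · exact Or.inl h1
          · exact Or.inr h2
        have hx0 : x0 = b₀ ∨ x0 = a₁ ∨ x0 = a₂ := by
          rcases hrem with ⟨h1, h2⟩ | ⟨h1, h2⟩
          · exact Or.inr h2
          · exact Or.inl h1
        have hb0supp : b₀ ∈ (Walk.cons h q).support := by
          rcases hrem with ⟨h1, -⟩ | ⟨h1, -⟩
          · rw [hsupp0]; exact h1 ▸ List.mem_cons_self
          · exact h1 ▸ hx0mem
        have had1 : T'.Adj (Sum.inl u0) cC := (hadjC u0).mpr hu0
        have had2 : T'.Adj cC (Sum.inl x0) := T'.adj_symm ((hadjC x0).mpr hx0)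
        refine ⟨Walk.cons had1 (Walk.cons had2 p''), fun e' he' => ?_, fun z' hz' => ?_⟩
        · rw [Walk.edges_cons, List.mem_cons] at he'
          rcases he' with rfl | he'
          · refine Or.inr ⟨?_, hb0supp⟩
            rcases hu0 with rfl | rfl | rfl
            · exact Or.inl rfl
            · exact Or.inr (Or.inl rfl)
            · exact Or.inr (Or.inr rfl)
          · rw [Walk.edges_cons, List.mem_cons] at he'
            rcases he' with rfl | he'
            · refine Or.inr ⟨?_, hb0supp⟩
              have : s(cC, Sum.inl x0) = s(Sum.inl x0, cC) := Sym2.eq_swap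
              rw [this]
              rcases hx0 with rfl | rfl | rfl
              · exact Or.inl rfl
              · exact Or.inr (Or.inl rfl)
              · exact Or.inr (Or.inr rfl)
            · rcases he e' he' with ⟨e, hee, hh⟩ | ⟨hh, -⟩
              · exact Or.inl ⟨e, by rw [hedge0]; exact List.mem_cons_of_mem _ hee, hh⟩
              · exact Or.inr ⟨hh, hb0supp⟩
        · rw [Walk.support_cons, List.mem_cons] at hz'
          rcases hz' with rfl | hz'
          · exact Or.inl ⟨u0, by rw [hsupp0]; exact List.mem_cons_self, rfl⟩
          · rw [Walk.support_cons, List.mem_cons] at hz'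
            rcases hz' with rfl | hz'
            · exact Or.inr ⟨rfl, hb0supp⟩
            · rcases hs z' hz' with ⟨z, hzz, hh⟩ | ⟨hh, -⟩
              · exact Or.inl ⟨z, by rw [hsupp0]; exact List.mem_cons_of_mem _ hzz, hh⟩
              · exact Or.inr ⟨hh, hb0supp⟩
      · -- keep the old link
        refine ⟨Walk.cons ((hadjI u0 x0).mpr ⟨h, hrem⟩) p'', fun e' he' => ?_,
          fun z' hz' => ?_⟩
        · rw [Walk.edges_cons, List.mem_cons] at he'
          rcases he' with rfl | he'
          · exact Or.inl ⟨s(u0, x0), by rw [hedge0]; exact List.mem_cons_self,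
              by rw [Sym2.map_pair_eq]⟩
          · rcases he e' he' with ⟨e, hee, hh⟩ | ⟨hh, hbs⟩
            · exact Or.inl ⟨e, by rw [hedge0]; exact List.mem_cons_of_mem _ hee, hh⟩
            · exact Or.inr ⟨hh, by rw [hsupp0]; exact List.mem_cons_of_mem _ hbs⟩
        · rw [Walk.support_cons, List.mem_cons] at hz'
          rcases hz' with rfl | hz'
          · exact Or.inl ⟨u0, by rw [hsupp0]; exact List.mem_cons_self, rfl⟩
          · rcases hs z' hz' with ⟨z, hzz, hh⟩ | ⟨hh, hbs⟩
            · exact Or.inl ⟨z, by rw [hsupp0]; exact List.mem_cons_of_mem _ hzz, hh⟩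
            · exact Or.inr ⟨hh, by rw [hsupp0]; exact List.mem_cons_of_mem _ hbs⟩
  -- collapse: walks in T' avoiding the new node yield walks in T
  have collapse : ∀ {u' w' : D.B ⊕ Unit} (p' : T'.Walk u' w'), cC ∉ p'.support →
      ∀ x : D.B, u' = Sum.inl x → ∃ y : D.B, w' = Sum.inl y ∧ ∃ W : D.T.Walk x y,
        (∀ e ∈ W.edges, e.map (Sum.inl : D.B → D.B ⊕ Unit) ∈ p'.edges ∧ ¬ (∃ z₁ z₂, e = s(z₁, z₂) ∧ rem z₁ z₂)) ∧
        (∀ z ∈ W.support, Sum.inl z ∈ p'.support) := by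
    intro u' w' p'
    induction p' with
    | nil =>
      intro hc x hx
      refine ⟨x, hx, ?_⟩
      subst hx
      exact ⟨Walk.nil, by simp, fun z hz => by
        rw [Walk.support_nil, List.mem_singleton] at hz
        rw [Walk.support_nil, hz]
        exact List.mem_singleton_self _⟩
    | cons h' q' ih =>
      rename_i u1 m1 w1
      intro hc x hx
      have hsupp0 : (Walk.cons h' q').support = u1 :: q'.support := Walk.support_cons _ _
      have hedge0 : (Walk.cons h' q').edges = s(u1, m1) :: q'.edges := Walk.edges_cons _ _
      have hcq : cC ∉ q'.support := fun hh => hc (by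
        rw [hsupp0]; exact List.mem_cons_of_mem _ hh)
      have hm1c : m1 ≠ cC := fun hh => hcq (hh ▸ Walk.start_mem_support q')
      obtain ⟨z, hz⟩ : ∃ z : D.B, m1 = Sum.inl z := by
        cases m1 with
        | inl z => exact ⟨z, rfl⟩
        | inr uu => cases uu; exact absurd rfl hm1c
      obtain ⟨y, hy, W', heW, hsW⟩ := ih hcq z hz
      subst hx
      subst hz
      obtain ⟨hT, hnr⟩ := (hadjI x z).mp h'
      refine ⟨y, hy, Walk.cons hT W', fun e hee => ?_, fun zz hzz => ?_⟩
      · rw [Walk.edges_cons, List.mem_cons] at hee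
        rcases hee with rfl | hee
        · constructor
          · rw [Sym2.map_pair_eq, hedge0]
            exact List.mem_cons_self
          · rintro ⟨z₁, z₂, hzz, hr⟩
            rw [Sym2.eq_iff] at hzz
            rcases hzz with ⟨rfl, rfl⟩ | ⟨rfl, rfl⟩
            · exact hnr hr
            · exact hnr (hremsymm hr)
        · obtain ⟨h1, h2⟩ := heW e hee
          exact ⟨by rw [hedge0]; exact List.mem_cons_of_mem _ h1, h2⟩
      · rw [Walk.support_cons, List.mem_cons] at hzz
        rcases hzz with rfl | hzz
        · rw [hsupp0]; exact List.mem_cons_self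
        · rw [hsupp0]; exact List.mem_cons_of_mem _ (hsW zz hzz)
  haveI : Nonempty (D.B ⊕ Unit) := ⟨cC⟩
  -- the final contradiction builder: two distinct T-paths between members of {b₀,a₁,a₂}
  have final : ∀ (z y : D.B) (W : D.T.Walk z y), z ≠ y →
      (z = b₀ ∨ z = a₁ ∨ z = a₂) → (y = b₀ ∨ y = a₁ ∨ y = a₂) →
      (∀ e ∈ W.edges, ¬ (∃ z₁ z₂, e = s(z₁, z₂) ∧ rem z₁ z₂)) → False := by
    intro z y W hzy hvz hvy hWe
    have hWe' : ∀ c, (c = a₁ ∨ c = a₂) → s(b₀, c) ∉ W.edges := by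
      intro c hcc hmem
      exact hWe _ hmem ⟨b₀, c, rfl, Or.inl ⟨rfl, hcc⟩⟩
    have hWe'' : ∀ c, (c = a₁ ∨ c = a₂) → s(c, b₀) ∉ W.edges := by
      intro c hcc hmem
      rw [Sym2.eq_swap] at hmem
      exact hWe' c hcc hmem
    rcases hvz with hz | hz | hz
    all_goals obtain rfl := hz.symm
    · -- z = b₀, y = a₁ or a₂
      rcases hvy with hy | hy | hy
      all_goals obtain rfl := hy.symm
      · exact hzy rfl
      · have hPeq := D.isTree.IsAcyclic.path_unique ⟨W.bypass, W.bypass_isPath⟩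
          (Path.singleton hab₁)
        have : s(b₀, a₁) ∈ W.bypass.edges := by
          rw [show W.bypass = ((Path.singleton hab₁ : D.T.Path b₀ a₁) :
            D.T.Walk b₀ a₁) from congrArg Subtype.val hPeq]
          simp [Path.singleton]
        exact hWe' a₁ (Or.inl rfl) (W.edges_bypass_subset this)
      · have hPeq := D.isTree.IsAcyclic.path_unique ⟨W.bypass, W.bypass_isPath⟩
          (Path.singleton hab₂)
        have : s(b₀, a₂) ∈ W.bypass.edges := by
          rw [show W.bypass = ((Path.singleton hab₂ : D.T.Path b₀ a₂) :
            D.T.Walk b₀ a₂) from congrArg Subtype.val hPeq]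
          simp [Path.singleton]
        exact hWe' a₂ (Or.inr rfl) (W.edges_bypass_subset this)
    · -- z = a₁
      rcases hvy with hy | hy | hy
      all_goals obtain rfl := hy.symm
      · have hPeq := D.isTree.IsAcyclic.path_unique ⟨W.bypass, W.bypass_isPath⟩
          (Path.singleton hab₁.symm)
        have : s(a₁, b₀) ∈ W.bypass.edges := by
          rw [show W.bypass = ((Path.singleton hab₁.symm : D.T.Path a₁ b₀) :
            D.T.Walk a₁ b₀) from congrArg Subtype.val hPeq]
          simp [Path.singleton]
        exact hWe'' a₁ (Or.inl rfl) (W.edges_bypass_subset this)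
      · exact hzy rfl
      · -- a₁ to a₂ : compare with the path a₁ - b₀ - a₂
        let Q : D.T.Walk a₁ a₂ := Walk.cons hab₁.symm (Walk.cons hab₂ Walk.nil)
        have hQ : Q.IsPath := mkpath hab₁.symm hab₂ h12
        have hPeq := D.isTree.IsAcyclic.path_unique ⟨W.bypass, W.bypass_isPath⟩ ⟨Q, hQ⟩
        have : s(a₁, b₀) ∈ W.bypass.edges := by
          rw [show W.bypass = Q from congrArg Subtype.val hPeq]
          rw [show Q.edges = [s(a₁, b₀), s(b₀, a₂)] from rfl]
          exact List.mem_cons_self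
        exact hWe'' a₁ (Or.inl rfl) (W.edges_bypass_subset this)
    · -- z = a₂
      rcases hvy with hy | hy | hy
      all_goals obtain rfl := hy.symm
      · have hPeq := D.isTree.IsAcyclic.path_unique ⟨W.bypass, W.bypass_isPath⟩
          (Path.singleton hab₂.symm)
        have : s(a₂, b₀) ∈ W.bypass.edges := by
          rw [show W.bypass = ((Path.singleton hab₂.symm : D.T.Path a₂ b₀) :
            D.T.Walk a₂ b₀) from congrArg Subtype.val hPeq]
          simp [Path.singleton]
        exact hWe'' a₂ (Or.inr rfl) (W.edges_bypass_subset this)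
      · -- a₂ to a₁ : compare with the path a₂ - b₀ - a₁
        let Q : D.T.Walk a₂ a₁ := Walk.cons hab₂.symm (Walk.cons hab₁ Walk.nil)
        have hQ : Q.IsPath := mkpath hab₂.symm hab₁ (Ne.symm h12)
        have hPeq := D.isTree.IsAcyclic.path_unique ⟨W.bypass, W.bypass_isPath⟩ ⟨Q, hQ⟩
        have : s(a₂, b₀) ∈ W.bypass.edges := by
          rw [show W.bypass = Q from congrArg Subtype.val hPeq]
          rw [show Q.edges = [s(a₂, b₀), s(b₀, a₁)] from rfl]
          exact List.mem_cons_self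
        exact hWe'' a₂ (Or.inr rfl) (W.edges_bypass_subset this)
      · exact hzy rfl
  -- acyclicity of T'
  have hacyc : T'.IsAcyclic := by
    intro u' K hK
    rcases Classical.em (cC ∈ K.support) with hc | hc
    · -- rotate the cycle to start at the new node
      have hK' := hK.rotate hc
      set K' := K.rotate cC hc with hKdef
      clear_value K'
      clear hKdef hK
      cases K' with
      | nil => exact hK'.ne_nil rfl
      | cons h₁ q₁ =>
        rename_i y₁
        rw [Walk.cons_isCycle_iff] at hK'
        obtain ⟨hq₁p, hne₁⟩ := hK'
        obtain ⟨y, hy⟩ : ∃ y : D.B, y₁ = Sum.inl y := by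
          cases y₁ with
          | inl z => exact ⟨z, rfl⟩
          | inr uu =>
            cases uu
            exact absurd rfl (T'.ne_of_adj h₁)
        -- peel the last link of q₁ off, via its reverse
        obtain ⟨z₁, h₂, r, hqr⟩ : ∃ (z₁ : D.B ⊕ Unit) (h₂ : T'.Adj cC z₁)
            (r : T'.Walk z₁ y₁), q₁.reverse = Walk.cons h₂ r := by
          cases hh : q₁.reverse with
          | nil => exact absurd hy.symm Sum.inl_ne_inr
          | cons h r => exact ⟨_, h, r, rfl⟩
        have hrp : r.IsPath ∧ cC ∉ r.support := by
          have : (Walk.cons h₂ r).IsPath := hqr ▸ hq₁p.reverse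
          rw [Walk.cons_isPath_iff] at this
          exact ⟨this.1, this.2⟩
        obtain ⟨z, hz⟩ : ∃ z : D.B, z₁ = Sum.inl z := by
          cases z₁ with
          | inl zz => exact ⟨zz, rfl⟩
          | inr uu =>
            cases uu
            exact absurd rfl (T'.ne_of_adj h₂)
        have hlast : s(cC, z₁) ∈ q₁.edges := by
          have : s(cC, z₁) ∈ q₁.reverse.edges := by
            rw [hqr, Walk.edges_cons]
            exact List.mem_cons_self
          rwa [Walk.edges_reverse, List.mem_reverse] at this
        have hzy : z ≠ y := by
          rintro rfl
          exact hne₁ ((show z₁ = y₁ by rw [hz, hy]) ▸ hlast)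
        subst hz
        subst hy
        obtain ⟨y2, hy2, W, heW, hsW⟩ := collapse r hrp.2 z rfl
        obtain rfl := Sum.inl_injective hy2
        have hvy : y = b₀ ∨ y = a₁ ∨ y = a₂ := h₁
        have hvz : z = b₀ ∨ z = a₁ ∨ z = a₂ := h₂
        exact final z y W hzy hvz hvy (fun e he => (heW e he).2)
    · -- the cycle avoids the new node entirely
      cases K with
      | nil => exact hK.ne_nil rfl
      | cons h q =>
        rename_i y'
        rw [Walk.cons_isCycle_iff] at hK
        obtain ⟨hqp, hne⟩ := hK
        have hcq : cC ∉ q.support := fun hh => hc (by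
          rw [Walk.support_cons]
          exact List.mem_cons_of_mem _ hh)
        obtain ⟨u0, hu0⟩ : ∃ u0 : D.B, u' = Sum.inl u0 := by
          cases u' with
          | inl z => exact ⟨z, rfl⟩
          | inr uu =>
            cases uu
            exact absurd (Walk.start_mem_support (Walk.cons h q)) hc
        obtain ⟨y0, hy0⟩ : ∃ y0 : D.B, y' = Sum.inl y0 := by
          cases y' with
          | inl z => exact ⟨z, rfl⟩
          | inr uu =>
            cases uu
            exact absurd (Walk.start_mem_support q) hcq
        subst hu0
        subst hy0
        obtain ⟨u2, hu2, W, heW, hsW⟩ := collapse q hcq y0 rfl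
        obtain rfl := Sum.inl_injective hu2
        obtain ⟨hT, hnr⟩ := (hadjI u0 y0).mp h
        have hPeq := D.isTree.IsAcyclic.path_unique ⟨W.bypass, W.bypass_isPath⟩
          (Path.singleton hT.symm)
        have hmem : s(y0, u0) ∈ W.bypass.edges := by
          rw [show W.bypass = ((Path.singleton hT.symm : D.T.Path y0 u0) :
            D.T.Walk y0 u0) from congrArg Subtype.val hPeq]
          simp [Path.singleton]
        have hmem2 := (heW _ (W.edges_bypass_subset hmem)).1
        rw [Sym2.map_pair_eq] at hmem2
        apply hne
        rw [Sym2.eq_swap]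
        exact hmem2
  -- the new decomposition
  let D' : TreeCutDecomp G :=
    { B := D.B ⊕ Unit
      finB := inferInstance
      T := T'
      isTree := by
        have hreach : ∀ x' : D.B ⊕ Unit, T'.Reachable x' (Sum.inl b₀) := by
          intro x'
          cases x' with
          | inl z =>
            obtain ⟨p⟩ := D.isTree.isConnected.preconnected z b₀
            obtain ⟨p', -, -⟩ := trans p
            exact ⟨p'⟩
          | inr uu =>
            cases uu
            exact ⟨Walk.cons (show T'.Adj cC (Sum.inl b₀) from Or.inl rfl) Walk.nil⟩
        exact ⟨Connected.mk (fun x' y' => (hreach x').trans (hreach y').symm), hacyc⟩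
      bag := fun x' => match x' with
        | .inl b => D.bag b
        | .inr _ => ∅
      disj := by
        rintro (x | uu) (y | vv) hne
        · exact D.disj (fun h : x = y => hne (congrArg Sum.inl h))
        · exact Set.disjoint_empty _
        · exact (Set.disjoint_empty _).symm
        · cases uu; cases vv; exact absurd rfl hne
      covers := fun v => by
        obtain ⟨b, hbv⟩ := D.covers v
        exact ⟨Sum.inl b, hbv⟩ }
  have hbagI : ∀ x : D.B, D'.bag (Sum.inl x) = D.bag x := fun _ => rfl
  have hbagC : D'.bag cC = ∅ := rfl
  have hwb0 : (D.nodeAdh b₀).ncard ≤ D.width := by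
    have hw := D.node_le_width b₀
    rwa [hb, Set.ncard_empty, Nat.zero_add] at hw
  -- witnesses of adhesion sets are `inl`s
  have getwit : ∀ (bb : D.B ⊕ Unit) (v : V), v ∈ D'.bag bb → ∃ b : D.B,
      bb = Sum.inl b ∧ v ∈ D.bag b := by
    rintro (b | uu) v hv
    · exact ⟨b, rfl, hv⟩
    · exact absurd hv (Set.notMem_empty v)
  refine ⟨D', ?_, ?_⟩
  · -- width bound
    apply width_le
    · intro l hl
      induction l using Sym2.inductionOn with
      | hf x' y' =>
        have hl' : T'.Adj x' y' := hl
        -- helper for links incident to the new node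
        have newlink : (∀ (bb dd : D.B) (p : D.T.Walk bb dd)
            (hall : ∀ p' : T'.Walk (Sum.inl bb) (Sum.inl dd), s(x', y') ∈ p'.edges),
            (∃ zz : D.B ⊕ Unit, s(x', y') = s(zz, cC)) → b₀ ∈ p.support) := by
          rintro bb dd p hall ⟨zz, hzz⟩
          obtain ⟨p', he, -⟩ := trans p
          rcases he _ (hall p') with ⟨e, -, hh⟩ | ⟨-, hbs⟩
          · exact absurd (hh ▸ hzz : e.map (Sum.inl : D.B → D.B ⊕ Unit) = s(zz, cC))
              (sym2_noc e zz)
          · exact hbs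
        cases x' with
        | inl x =>
          cases y' with
          | inl y =>
            obtain ⟨hT, -⟩ := (hadjI x y).mp hl'
            have hsub : D'.linkAdh s(Sum.inl x, Sum.inl y) ⊆ D.linkAdh s(x, y) := by
              rintro e ⟨heG, v, w, bb', dd', rfl, hvb, hwd, hall⟩
              obtain ⟨bb, rfl, hvb'⟩ := getwit bb' v hvb
              obtain ⟨dd, rfl, hwd'⟩ := getwit dd' w hwd
              refine ⟨heG, v, w, bb, dd, rfl, hvb', hwd', fun p => ?_⟩
              obtain ⟨p', he, -⟩ := trans p
              rcases he _ (hall p') with ⟨e, hee, hh⟩ | ⟨hh, -⟩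
              · rwa [sym2_inl e x y hh.symm] at hee
              · exfalso
                rcases hh with hh | hh | hh <;> rw [Sym2.eq_iff] at hh <;>
                  rcases hh with ⟨-, h2⟩ | ⟨h1, -⟩ <;>
                  first
                    | exact Sum.inl_ne_inr h2
                    | exact Sum.inl_ne_inr h1
            calc (D'.linkAdh s(Sum.inl x, Sum.inl y)).ncard ≤ (D.linkAdh s(x, y)).ncard :=
                  Set.ncard_le_ncard hsub (Set.toFinite _)
              _ ≤ D.width := D.linkAdh_ncard_le_width hT
          | inr uu =>
            cases uu
            have hsub : D'.linkAdh s(Sum.inl x, cC) ⊆ D.nodeAdh b₀ := by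
              rintro e ⟨heG, v, w, bb', dd', rfl, hvb, hwd, hall⟩
              obtain ⟨bb, rfl, hvb'⟩ := getwit bb' v hvb
              obtain ⟨dd, rfl, hwd'⟩ := getwit dd' w hwd
              have hbne : bb ≠ b₀ := fun h => by
                rw [h, hb] at hvb'; exact hvb'
              have hdne : dd ≠ b₀ := fun h => by
                rw [h, hb] at hwd'; exact hwd'
              exact ⟨heG, v, w, bb, dd, rfl, hvb', hwd', hbne, hdne,
                fun p => newlink bb dd p hall ⟨Sum.inl x, rfl⟩⟩
            calc (D'.linkAdh s(Sum.inl x, cC)).ncard ≤ (D.nodeAdh b₀).ncard :=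
                  Set.ncard_le_ncard hsub (Set.toFinite _)
              _ ≤ D.width := hwb0
        | inr uu =>
          cases uu
          cases y' with
          | inl y =>
            have hsub : D'.linkAdh s(cC, Sum.inl y) ⊆ D.nodeAdh b₀ := by
              rintro e ⟨heG, v, w, bb', dd', rfl, hvb, hwd, hall⟩
              obtain ⟨bb, rfl, hvb'⟩ := getwit bb' v hvb
              obtain ⟨dd, rfl, hwd'⟩ := getwit dd' w hwd
              have hbne : bb ≠ b₀ := fun h => by
                rw [h, hb] at hvb'; exact hvb'
              have hdne : dd ≠ b₀ := fun h => by
                rw [h, hb] at hwd'; exact hwd'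
              refine ⟨heG, v, w, bb, dd, rfl, hvb', hwd', hbne, hdne, fun p => ?_⟩
              exact newlink bb dd p hall ⟨Sum.inl y, Sym2.eq_swap⟩
            calc (D'.linkAdh s(cC, Sum.inl y)).ncard ≤ (D.nodeAdh b₀).ncard :=
                  Set.ncard_le_ncard hsub (Set.toFinite _)
              _ ≤ D.width := hwb0
          | inr vv =>
            exfalso
            cases vv
            exact T'.irrefl hl'
    · intro x'
      cases x' with
      | inl x =>
        have hsub : D'.nodeAdh (Sum.inl x) ⊆ D.nodeAdh x := by
          rintro e ⟨heG, v, w, bb', dd', rfl, hvb, hwd, hbb, hdd, hall⟩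
          obtain ⟨bb, rfl, hvb'⟩ := getwit bb' v hvb
          obtain ⟨dd, rfl, hwd'⟩ := getwit dd' w hwd
          refine ⟨heG, v, w, bb, dd, rfl, hvb', hwd',
            fun h => hbb (congrArg Sum.inl h), fun h => hdd (congrArg Sum.inl h),
            fun p => ?_⟩
          obtain ⟨p', -, hs⟩ := trans p
          rcases hs _ (hall p') with ⟨z, hz, hh⟩ | ⟨hh, -⟩
          · rw [Sum.inl_injective hh]; exact hz
          · exact absurd hh Sum.inl_ne_inr
        calc (D'.bag (Sum.inl x)).ncard + (D'.nodeAdh (Sum.inl x)).ncard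
            ≤ (D.bag x).ncard + (D.nodeAdh x).ncard :=
              Nat.add_le_add le_rfl (Set.ncard_le_ncard hsub (Set.toFinite _))
          _ ≤ D.width := D.node_le_width x
      | inr uu =>
        cases uu
        have hsub : D'.nodeAdh cC ⊆ D.nodeAdh b₀ := by
          rintro e ⟨heG, v, w, bb', dd', rfl, hvb, hwd, hbb, hdd, hall⟩
          obtain ⟨bb, rfl, hvb'⟩ := getwit bb' v hvb
          obtain ⟨dd, rfl, hwd'⟩ := getwit dd' w hwd
          have hbne : bb ≠ b₀ := fun h => by
            rw [h, hb] at hvb'; exact hvb'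
          have hdne : dd ≠ b₀ := fun h => by
            rw [h, hb] at hwd'; exact hwd'
          refine ⟨heG, v, w, bb, dd, rfl, hvb', hwd', hbne, hdne, fun p => ?_⟩
          obtain ⟨p', -, hs⟩ := trans p
          rcases hs _ (hall p') with ⟨z, -, hh⟩ | ⟨-, hbs⟩
          · exact absurd hh.symm Sum.inl_ne_inr
          · exact hbs
        have hbagCn : (D'.bag cC).ncard = 0 := by rw [hbagC, Set.ncard_empty]
        calc (D'.bag cC).ncard + (D'.nodeAdh cC).ncard
            ≤ 0 + (D.nodeAdh b₀).ncard := by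
              rw [hbagCn]
              exact Nat.add_le_add le_rfl (Set.ncard_le_ncard hsub (Set.toFinite _))
          _ ≤ D.width := by rw [Nat.zero_add]; exact hwb0
  · -- mu decreases
    haveI fB := Fintype.ofFinite D.B
    -- degree computations
    have hnbC : T'.neighborSet cC = {Sum.inl b₀, Sum.inl a₁, Sum.inl a₂} := by
      ext z'
      cases z' with
      | inl z =>
        show (z = b₀ ∨ z = a₁ ∨ z = a₂) ↔ _
        simp [Sum.inl.injEq]
      | inr uu =>
        cases uu
        show False ↔ _
        simp [cC]
    have hdegC : (T'.neighborSet cC).ncard = 3 := by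
      rw [hnbC, Set.ncard_eq_three]
      refine ⟨_, _, _, ?_, ?_, ?_, rfl⟩
      · simp [Sum.inl.injEq]
        exact fun h => ha1 h.symm
      · simp [Sum.inl.injEq]
        exact fun h => ha2 h.symm
      · simp [Sum.inl.injEq]
        exact h12
    have hrem_b0 : ∀ z, rem b₀ z ↔ (z = a₁ ∨ z = a₂) := by
      intro z
      constructor
      · rintro (⟨-, h2⟩ | ⟨-, h2 | h2⟩)
        · exact h2
        · exact absurd h2.symm ha1
        · exact absurd h2.symm ha2
      · intro h
        exact Or.inl ⟨rfl, h⟩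
    have hdegB0 : (T'.neighborSet (Sum.inl b₀)).ncard
        = (D.T.neighborSet b₀).ncard - 1 := by
      have hset : T'.neighborSet (Sum.inl b₀)
          = insert cC (Sum.inl '' (D.T.neighborSet b₀ \ {a₁, a₂})) := by
        ext z'
        cases z' with
        | inl z =>
          show (D.T.Adj b₀ z ∧ ¬ rem b₀ z) ↔ _
          rw [hrem_b0]
          simp only [Set.mem_insert_iff, Set.mem_image, Set.mem_diff,
            Set.mem_singleton_iff]
          constructor
          · rintro ⟨hT, hz⟩
            exact Or.inr ⟨z, ⟨hT, by tauto⟩, rfl⟩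
          · rintro (hh | ⟨zz, ⟨hT, hzz⟩, hzeq⟩)
            · exact absurd hh Sum.inl_ne_inr
            · cases Sum.inl_injective hzeq
              exact ⟨hT, by tauto⟩
        | inr uu =>
          cases uu
          show (b₀ = b₀ ∨ b₀ = a₁ ∨ b₀ = a₂) ↔ _
          simp [cC]
      rw [hset]
      have hsubpair : ({a₁, a₂} : Set D.B) ⊆ D.T.neighborSet b₀ := by
        rintro z (rfl | rfl)
        · exact hm1
        · exact hm2
      rw [Set.ncard_insert_of_notMem (by
          rintro ⟨z, -, hz⟩
          exact Sum.inl_ne_inr hz) (Set.toFinite _),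
        Set.ncard_image_of_injective _ Sum.inl_injective,
        Set.ncard_diff hsubpair (Set.toFinite _), Set.ncard_pair h12]
      have h4 := hdeg
      omega
    have hdegI : ∀ x : D.B, x ≠ b₀ →
        (T'.neighborSet (Sum.inl x)).ncard = (D.T.neighborSet x).ncard := by
      intro x hxb
      have hIset : ∀ (hx1 : x = a₁ ∨ x = a₂), T'.neighborSet (Sum.inl x)
          = insert cC (Sum.inl '' (D.T.neighborSet x \ {b₀})) := by
        intro hx1
        ext z'
        cases z' with
        | inl z =>
          show (D.T.Adj x z ∧ ¬ rem x z) ↔ _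
          simp only [Set.mem_insert_iff, Set.mem_image, Set.mem_diff,
            Set.mem_singleton_iff]
          constructor
          · rintro ⟨hT, hz⟩
            refine Or.inr ⟨z, ⟨hT, fun hzb => hz ?_⟩, rfl⟩
            exact Or.inr ⟨hzb, hx1⟩
          · rintro (hh | ⟨zz, ⟨hT, hzz⟩, hzeq⟩)
            · exact absurd hh Sum.inl_ne_inr
            · cases Sum.inl_injective hzeq
              refine ⟨hT, ?_⟩
              rintro (⟨h1, -⟩ | ⟨h1, -⟩)
              · exact hxb h1
              · exact hzz h1
        | inr uu =>
          cases uu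
          show (x = b₀ ∨ x = a₁ ∨ x = a₂) ↔ _
          exact iff_of_true (Or.inr hx1) (Set.mem_insert_iff.mpr (Or.inl rfl))
      by_cases hx12 : x = a₁ ∨ x = a₂
      · have hxmem : b₀ ∈ D.T.neighborSet x := by
          rcases hx12 with rfl | rfl
          · exact hab₁.symm
          · exact hab₂.symm
        rw [hIset hx12, Set.ncard_insert_of_notMem (by
            rintro ⟨z, -, hz⟩
            exact Sum.inl_ne_inr hz) (Set.toFinite _),
          Set.ncard_image_of_injective _ Sum.inl_injective,
          Set.ncard_diff_singleton_of_mem hxmem]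
        have hpos : 0 < (D.T.neighborSet x).ncard := by
          rw [Set.ncard_pos (Set.toFinite _)]
          exact ⟨b₀, hxmem⟩
        omega
      · push_neg at hx12
        obtain ⟨hx1, hx2⟩ := hx12
        have hset : T'.neighborSet (Sum.inl x) = Sum.inl '' (D.T.neighborSet x) := by
          ext z'
          cases z' with
          | inl z =>
            show (D.T.Adj x z ∧ ¬ rem x z) ↔ _
            simp only [Set.mem_image]
            constructor
            · rintro ⟨hT, -⟩
              exact ⟨z, hT, rfl⟩
            · rintro ⟨zz, hT, hzeq⟩
              cases Sum.inl_injective hzeq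
              refine ⟨hT, ?_⟩
              rintro (⟨h1, -⟩ | ⟨-, h2 | h2⟩)
              · exact hxb h1
              · exact hx1 h2
              · exact hx2 h2
          | inr uu =>
            cases uu
            show (x = b₀ ∨ x = a₁ ∨ x = a₂) ↔ _
            refine iff_of_false ?_ ?_
            · rintro (h | h | h)
              · exact hxb h
              · exact hx1 h
              · exact hx2 h
            · rintro ⟨z, -, hz⟩
              exact Sum.inl_ne_inr hz
        rw [hset, Set.ncard_image_of_injective _ Sum.inl_injective]
    -- put the sums together
    have hbagD : ∀ x : D.B, D'.bag (Sum.inl x) = D.bag x := fun _ => rfl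
    have hkey : ∀ x : D.B, x ≠ b₀ → D'.muF (Sum.inl x) = D.muF x := by
      intro x hxb
      simp only [muF, hbagD, show D'.T = T' from rfl, hdegI x hxb]
    have hkeyb0 : D'.muF (Sum.inl b₀) + 1 = D.muF b₀ := by
      simp only [muF, hbagD, show D'.T = T' from rfl, hdegB0, hb, eq_self_iff_true,
        if_true]
      have hd := hdeg
      omega
    have hkeyC : D'.muF cC = 0 := by
      simp only [muF, show D'.T = T' from rfl, hdegC, hbagC, eq_self_iff_true, if_true]
    have hmu' : D'.mu = ∑ x' : D.B ⊕ Unit, D'.muF x' := finsum_eq_sum_of_fintype _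
    have hmuD : D.mu = ∑ b : D.B, D.muF b := finsum_eq_sum_of_fintype _
    have hsum : ∑ x' : D.B ⊕ Unit, D'.muF x'
        = ∑ x : D.B, D'.muF (Sum.inl x) + D'.muF cC := by
      rw [Fintype.sum_sum_type]
      congr 1
    have hsplit' : ∑ x ∈ Finset.univ.erase b₀, D'.muF (Sum.inl x) + D'.muF (Sum.inl b₀)
        = ∑ x : D.B, D'.muF (Sum.inl x) :=
      Finset.sum_erase_add _ _ (Finset.mem_univ b₀)
    have hsplit : ∑ x ∈ Finset.univ.erase b₀, D.muF x + D.muF b₀ = ∑ b : D.B, D.muF b :=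
      Finset.sum_erase_add _ _ (Finset.mem_univ b₀)
    have hcongr : ∑ x ∈ Finset.univ.erase b₀, D'.muF (Sum.inl x)
        = ∑ x ∈ Finset.univ.erase b₀, D.muF x :=
      Finset.sum_congr rfl (fun x hx => hkey x (Finset.mem_erase.mp hx).1)
    rw [hmu', hmuD, hsum, hkeyC, ← hsplit', ← hsplit, hcongr]
    omega

end TreeCutDecomp

/-- Every finite connected simple graph `G` has an optimal tree-cut decomposition
(one of width `scw(G)`) in which every node with an empty bag has degree exactly `3`
in the tree. -/
theorem exists_optimal_decomp_empty_bags_trivalent [Finite V] (G : SimpleGraph V)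
    (hG : G.Connected) :
    ∃ D : TreeCutDecomp G, D.width = screewidth G ∧
      ∀ b : D.B, D.bag b = ∅ → ({c : D.B | D.T.Adj b c}).ncard = 3 := by
  classical
  haveI : Nonempty V := hG.nonempty
  set S : Set ℕ := {m | ∃ D : TreeCutDecomp G, D.width = screewidth G ∧ D.mu = m} with hS
  have hSne : S.Nonempty := by
    obtain ⟨D, hD⟩ := exists_width_eq_screewidth G
    exact ⟨D.mu, D, hD, rfl⟩
  obtain ⟨D, hDw, hDmu⟩ := Nat.sInf_mem hSne
  refine ⟨D, hDw, ?_⟩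
  intro b hbag
  by_contra hne3
  haveI := D.finB
  have hset : ({c : D.B | D.T.Adj b c}) = D.T.neighborSet b := rfl
  rw [hset] at hne3
  -- the degree of b cannot be 0, since G is connected and nonempty
  have hd0 : (D.T.neighborSet b).ncard ≠ 0 := by
    intro h0
    have hall : ∀ x : D.B, x = b := by
      intro x
      by_contra hxb
      obtain ⟨p⟩ := D.isTree.isConnected.preconnected b x
      cases p with
      | nil => exact hxb rfl
      | cons h q =>
        have hmem : _ ∈ D.T.neighborSet b := h
        have hpos : 0 < (D.T.neighborSet b).ncard :=
          (Set.ncard_pos (Set.toFinite _)).mpr ⟨_, hmem⟩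
        omega
    obtain ⟨v⟩ := (inferInstance : Nonempty V)
    obtain ⟨bb, hbb⟩ := D.covers v
    rw [hall bb, hbag] at hbb
    exact hbb
  -- apply the appropriate surgery
  obtain ⟨D', hw', hmu'⟩ : ∃ D' : TreeCutDecomp G, D'.width ≤ D.width ∧ D'.mu < D.mu := by
    have hcase : (D.T.neighborSet b).ncard = 1 ∨ (D.T.neighborSet b).ncard = 2 ∨
        4 ≤ (D.T.neighborSet b).ncard := by omega
    rcases hcase with h | h | h
    · exact D.surgery_leaf b hbag h
    · exact D.surgery_contract b hbag h
    · exact D.surgery_split b hbag h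
  have hscw : screewidth G ≤ D'.width := screewidth_le_width D'
  have hw'' : D'.width = screewidth G := le_antisymm (hw'.trans_eq hDw) hscw
  have hmem' : D'.mu ∈ S := ⟨D', hw'', rfl⟩
  have hle := Nat.sInf_le hmem'
  omega
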